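/- For all integers c ≥ 0 and i ≥ 0, setting k = c + i, the average-case PAR with respect to party 2 of the bounded-bisection-auction tiling T_{c,i} for the function A_k is at least its average-case PAR with respect to party 1; consequently the average-case subjective PAR of T_{c,i} equals (c+5)/4 − 1/2^{c+2} + c/2^{k+2}. -/

import Mathlib

open Finset

/-- The value space `{0,…,2^k−1} × {0,…,2^k−1}`. -/
def Vk (k : ℕ) : Finset (ℕ × ℕ) := Finset.range (2 ^ k) ×ˢ Finset.range (2 ^ k)

/-- A tiling of `Vk k`: a finite collection of nonempty rectangles partitioning `Vk k`. -/
def IsTiling (k : ℕ) (T : Finset (Finset (ℕ × ℕ))) : Prop :=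
  (∀ R ∈ T, ∃ S S' : Finset ℕ, R = S ×ˢ S') ∧
    (∀ R ∈ T, R.Nonempty) ∧ (∀ R ∈ T, R ⊆ Vk k) ∧ ∀ x ∈ Vk k, ∃! R, R ∈ T ∧ x ∈ R

/-- `f`-monochromaticity of a tiling. -/
def Mono {β : Type} (f : ℕ × ℕ → β) (T : Finset (Finset (ℕ × ℕ))) : Prop :=
  ∀ R ∈ T, ∀ x ∈ R, ∀ y ∈ R, f x = f y

/-- The tile of `T` containing `x` (union of all tiles containing `x`; for a
tiling this is exactly the unique tile containing `x`). -/
def tileOf (T : Finset (Finset (ℕ × ℕ))) (x : ℕ × ℕ) : Finset (ℕ × ℕ) :=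
  (T.filter fun R => x ∈ R).sup id

/-- The ideal region of `x`: the level set of `f x` inside `Vk k`. -/
def ideal {β : Type} [DecidableEq β] (k : ℕ) (f : ℕ × ℕ → β) (x : ℕ × ℕ) : Finset (ℕ × ℕ) :=
  (Vk k).filter fun y => f y = f x

/-- Average-case objective PAR of a tiling w.r.t. the uniform distribution. -/
def avgObjPAR {β : Type} [DecidableEq β] (k : ℕ) (f : ℕ × ℕ → β)
    (T : Finset (Finset (ℕ × ℕ))) : ℚ :=
  (∑ x ∈ Vk k, ((ideal k f x).card : ℚ) / ((tileOf T x).card : ℚ)) / 2 ^ (2 * k)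

/-- Average-case PAR with respect to party 1. -/
def avgPAR1 {β : Type} [DecidableEq β] (k : ℕ) (f : ℕ × ℕ → β)
    (T : Finset (Finset (ℕ × ℕ))) : ℚ :=
  (∑ x ∈ Vk k,
      (((Finset.range (2 ^ k)).filter fun y => f (x.1, y) = f x).card : ℚ) /
        (((Finset.range (2 ^ k)).filter fun y => (x.1, y) ∈ tileOf T x).card : ℚ)) /
    2 ^ (2 * k)

/-- Average-case PAR with respect to party 2. -/
def avgPAR2 {β : Type} [DecidableEq β] (k : ℕ) (f : ℕ × ℕ → β)
    (T : Finset (Finset (ℕ × ℕ))) : ℚ :=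
  (∑ x ∈ Vk k,
      (((Finset.range (2 ^ k)).filter fun y => f (y, x.2) = f x).card : ℚ) /
        (((Finset.range (2 ^ k)).filter fun y => (y, x.2) ∈ tileOf T x).card : ℚ)) /
    2 ^ (2 * k)

/-- The millionaires function: `1` if `x1 ≥ x2`, else `2`. -/
def Mil (x : ℕ × ℕ) : ℕ := if x.2 ≤ x.1 then 1 else 2

/-- The second-price auction function. -/
def Auc (x : ℕ × ℕ) : ℕ × ℕ := if x.2 ≤ x.1 then (1, x.2) else (2, x.1)

/-- Translate a tile by `(a, a)`. -/
def shiftTile (a : ℕ) (R : Finset (ℕ × ℕ)) : Finset (ℕ × ℕ) :=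
  R.image fun p => (p.1 + a, p.2 + a)

/-- The bisection-protocol tiling `B_k`. -/
def Btile : ℕ → Finset (Finset (ℕ × ℕ))
  | 0 => {{(0, 0)}}
  | j + 1 =>
    Btile j ∪ (Btile j).image (shiftTile (2 ^ j)) ∪
      {Finset.range (2 ^ j) ×ˢ Finset.Ico (2 ^ j) (2 ^ (j + 1)),
        Finset.Ico (2 ^ j) (2 ^ (j + 1)) ×ˢ Finset.range (2 ^ j)}

/-- The bounded-bisection-auction tiling `T_{c,i}`. -/
def BBA : ℕ → ℕ → Finset (Finset (ℕ × ℕ))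
  | 0, i =>
    (Finset.range (2 ^ i)).image (fun p => Finset.Ico p (2 ^ i) ×ˢ ({p} : Finset ℕ)) ∪
      (Finset.range (2 ^ i - 1)).image fun p => ({p} : Finset ℕ) ×ˢ Finset.Ico (p + 1) (2 ^ i)
  | c + 1, i =>
    BBA c i ∪ (BBA c i).image (shiftTile (2 ^ (c + i))) ∪
      (Finset.range (2 ^ (c + i))).image
        (fun j => Finset.Ico (2 ^ (c + i)) (2 ^ (c + i + 1)) ×ˢ ({j} : Finset ℕ)) ∪
      (Finset.range (2 ^ (c + i))).image fun j =>
        ({j} : Finset ℕ) ×ˢ Finset.Ico (2 ^ (c + i)) (2 ^ (c + i + 1))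

/-- The public-good function: `true` iff `x1 + x2 ≥ 2^k − 1` ("Build"). -/
def PG (k : ℕ) (x : ℕ × ℕ) : Bool := decide (2 ^ k - 1 ≤ x.1 + x.2)

/-- The truthful public-good function: `none` = "Do Not Build". -/
def TPG (c : ℕ) (x : ℕ × ℕ) : Option (ℕ × ℕ) :=
  if x.1 + x.2 < c then none else some (c - x.2, c - x.1)

/-- The tiling of `Vk k` into singleton cells (sealed-bid auction). -/
def sealedTiling (k : ℕ) : Finset (Finset (ℕ × ℕ)) :=
  (Vk k).image fun x => ({x} : Finset (ℕ × ℕ))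

/-!
Recursing along the quadrant decomposition of `T_{c,i}` gives the tile `S ×ˢ T` containing each
point (`BBA.sides`). On or below the diagonal every tile is a row segment `S ×ˢ {j}` and above it a
column segment `{j} ×ˢ T`, while the level sets of `A_k` seen by party 2 at `x₂ ≤ x₁` and by
party 1 at `x₁ < x₂` are the segments `[x₂, 2^k) × {x₂}` and `{x₁} × (x₁, 2^k)`. Hence in the
party-2 sum a horizontal tile on row `j` contributes `2^k - j` in total, in the party-1 sum a
vertical tile on column `j` contributes `2^k - 1 - j`, and every other point contributes `1`. The
multisets of rows and columns of these tiles satisfy doubling recursions in `c`, which yield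
`(c+5)/4 + (c - 2^i)/2^(k+2)` for party 2 and `(c+5)/4 + (2 - c - 2^i - 2^(c+1))/2^(k+2)` for
party 1.
-/

lemma mem_Vk {k : ℕ} {x : ℕ × ℕ} : x ∈ Vk k ↔ x.1 < 2 ^ k ∧ x.2 < 2 ^ k := by
  simp [Vk]

lemma sum_Vk_succ {M : Type*} [AddCommMonoid M] (k : ℕ) (f : ℕ × ℕ → M) :
    ∑ x ∈ Vk (k + 1), f x = ∑ x ∈ Vk k, (f x + f (x.1 + 2 ^ k, x.2) + f (x.1, x.2 + 2 ^ k) +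
      f (x.1 + 2 ^ k, x.2 + 2 ^ k)) := by
  simp only [Vk, sum_product, sum_add_distrib, pow_succ, mul_two, sum_range_add]
  simp only [add_comm (2 ^ k)]
  abel

lemma tileOf_eq_of_forall_eq {T : Finset (Finset (ℕ × ℕ))} {R : Finset (ℕ × ℕ)} {x : ℕ × ℕ}
    (hR : R ∈ T) (hx : x ∈ R) (huniq : ∀ R' ∈ T, x ∈ R' → R' = R) : tileOf T x = R := by
  have : T.filter (fun R' => x ∈ R') = {R} := by
    ext R'
    simp only [mem_filter, mem_singleton]
    exact ⟨fun h => huniq R' h.1 h.2, fun h => h ▸ ⟨hR, hx⟩⟩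
  rw [tileOf, this, sup_singleton, id]

lemma mem_shiftTile {a : ℕ} {R : Finset (ℕ × ℕ)} {x : ℕ × ℕ} :
    x ∈ shiftTile a R ↔ a ≤ x.1 ∧ a ≤ x.2 ∧ (x.1 - a, x.2 - a) ∈ R := by
  constructor
  · intro h
    obtain ⟨p, hp, rfl⟩ := mem_image.1 h
    simpa using hp
  · rintro ⟨h1, h2, h⟩
    exact mem_image.2 ⟨_, h, by ext <;> simp <;> omega⟩

lemma shiftTile_product (a : ℕ) (S T : Finset ℕ) :
    shiftTile a (S ×ˢ T) = S.image (· + a) ×ˢ T.image (· + a) := by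
  rw [shiftTile, ← prodMap_image_product]
  rfl

lemma card_filter_mem_product_left {n b : ℕ} {S T : Finset ℕ} (hS : S ⊆ range n) (hb : b ∈ T) :
    ((range n).filter fun y => (y, b) ∈ S ×ˢ T).card = S.card := by
  congr 1
  ext y
  simp only [mem_filter, mem_product]
  exact ⟨fun h => h.2.1, fun h => ⟨hS h, h, hb⟩⟩

lemma card_filter_mem_product_right {n a : ℕ} {S T : Finset ℕ} (hT : T ⊆ range n) (ha : a ∈ S) :
    ((range n).filter fun y => (a, y) ∈ S ×ˢ T).card = T.card := by
  congr 1
  ext y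
  simp only [mem_filter, mem_product]
  exact ⟨fun h => h.2.2, fun h => ⟨hT h, ha, h⟩⟩

lemma sum_range_ite_le (n b : ℕ) (t : ℚ) :
    ∑ a ∈ range n, (if b ≤ a then t else 0) = (n - b : ℕ) * t := by
  rw [← sum_filter, sum_const, nsmul_eq_mul, ← Nat.card_Ico]
  congr 3
  ext a
  simp only [mem_filter, mem_range, mem_Ico]
  tauto

lemma sum_range_natCast (n : ℕ) : ∑ j ∈ range n, (j : ℚ) = n * (n - 1) / 2 := by
  induction n with
  | zero => simp
  | succ n ih => rw [sum_range_succ, ih]; push_cast; ring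

lemma sum_map_sub_doubling (s : Multiset ℕ) (n : ℕ) (t : ℚ) :
    ((s + s.map (· + n) + Multiset.range n).map fun j : ℕ => t + n - j).sum =
      2 * (s.map fun j : ℕ => t - j).sum + n * s.card + n * (t + n) - n * (n - 1) / 2 := by
  have hlow : s.map (fun j : ℕ => t + n - j) = s.map fun j : ℕ => (t - j) + n :=
    Multiset.map_congr rfl fun j _ => by ring
  have hhigh : s.map ((fun j : ℕ => t + n - j) ∘ (· + n)) = s.map fun j : ℕ => t - j :=
    Multiset.map_congr rfl fun j _ => by simp only [Function.comp_apply]; push_cast; ring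
  rw [Multiset.map_add, Multiset.map_add, Multiset.sum_add, Multiset.sum_add, Multiset.map_map,
    hlow, hhigh, Multiset.sum_map_add, Multiset.map_const', Multiset.sum_replicate, nsmul_eq_mul,
    ← range_val, ← sum_eq_multiset_sum, sum_sub_distrib, sum_range_natCast, sum_const,
    card_range, nsmul_eq_mul]
  ring

lemma sum_Vk_snd_div_two_pow (k : ℕ) (φ : ℕ → ℚ) :
    ∑ x ∈ Vk k, φ x.2 / 2 ^ k = ∑ b ∈ range (2 ^ k), φ b := by
  rw [Vk, sum_product_right]
  refine sum_congr rfl fun b _ => ?_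
  simp only [sum_const, card_range, nsmul_eq_mul]
  push_cast
  field_simp

lemma sum_Vk_fst_div_two_pow (k : ℕ) (ψ : ℕ → ℚ) :
    ∑ x ∈ Vk k, ψ x.1 / 2 ^ k = ∑ a ∈ range (2 ^ k), ψ a := by
  rw [Vk, sum_product]
  refine sum_congr rfl fun a _ => ?_
  simp only [sum_const, card_range, nsmul_eq_mul]
  push_cast
  field_simp

lemma sum_Vk_ite_le_one_zero (k : ℕ) :
    ∑ x ∈ Vk k, (if x.2 ≤ x.1 then (1 : ℚ) else 0) = 2 ^ k * (2 ^ k + 1) / 2 := by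
  rw [Vk, sum_product_right]
  simp only [sum_range_ite_le, mul_one]
  rw [sum_congr rfl fun b hb => Nat.cast_sub (mem_range.1 hb).le, sum_sub_distrib,
    sum_range_natCast, sum_const, card_range, nsmul_eq_mul]
  push_cast
  ring

lemma sum_Vk_ite_le_zero_one (k : ℕ) :
    ∑ x ∈ Vk k, (if x.2 ≤ x.1 then (0 : ℚ) else 1) = 2 ^ k * (2 ^ k - 1) / 2 := by
  have h : ∀ x : ℕ × ℕ, (if x.2 ≤ x.1 then (0 : ℚ) else 1) = 1 - if x.2 ≤ x.1 then 1 else 0 :=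
    fun x => by split_ifs <;> norm_num
  rw [sum_congr rfl fun x _ => h x, sum_sub_distrib, sum_Vk_ite_le_one_zero, sum_const, Vk,
    card_product, card_range, nsmul_eq_mul]
  push_cast
  ring

lemma card_filter_Auc_left {k : ℕ} {x : ℕ × ℕ} (hx : x.1 < 2 ^ k) :
    ((range (2 ^ k)).filter fun y => Auc (y, x.2) = Auc x).card =
      if x.2 ≤ x.1 then 2 ^ k - x.2 else 1 := by
  rw [← Nat.card_Ico x.2, ← card_singleton x.1, ← apply_ite]
  congr 1
  ext y
  by_cases h : x.2 ≤ x.1 <;> by_cases hy : x.2 ≤ y <;> simp [Auc, h, hy] <;> omega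

lemma card_filter_Auc_right {k : ℕ} {x : ℕ × ℕ} (hx : x.2 < 2 ^ k) :
    ((range (2 ^ k)).filter fun y => Auc (x.1, y) = Auc x).card =
      if x.2 ≤ x.1 then 1 else 2 ^ k - (x.1 + 1) := by
  rw [← Nat.card_Ico (x.1 + 1), ← card_singleton x.2, ← apply_ite]
  congr 1
  ext y
  by_cases h : x.2 ≤ x.1 <;> by_cases hy : y ≤ x.1 <;> simp [Auc, h, hy] <;> omega

namespace BBA

/-- The sides `(S, T)` of the tile `S ×ˢ T` of `BBA c i` containing `x`. -/
def sides : ℕ → ℕ → ℕ × ℕ → Finset ℕ × Finset ℕ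
  | 0, i, x => if x.2 ≤ x.1 then (Ico x.2 (2 ^ i), {x.2}) else ({x.1}, Ico (x.1 + 1) (2 ^ i))
  | c + 1, i, x =>
    if x.1 < 2 ^ (c + i) then
      if x.2 < 2 ^ (c + i) then sides c i x
      else ({x.1}, Ico (2 ^ (c + i)) (2 ^ (c + i + 1)))
    else if x.2 < 2 ^ (c + i) then (Ico (2 ^ (c + i)) (2 ^ (c + i + 1)), {x.2})
    else Prod.map (image (· + 2 ^ (c + i))) (image (· + 2 ^ (c + i)))
      (sides c i (x.1 - 2 ^ (c + i), x.2 - 2 ^ (c + i)))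

/-- The rows `j` of the horizontal tiles `S ×ˢ {j}` of `BBA c i` (those on or below the
diagonal), with multiplicity. -/
def rowTiles : ℕ → ℕ → Multiset ℕ
  | 0, i => Multiset.range (2 ^ i)
  | c + 1, i => rowTiles c i + (rowTiles c i).map (· + 2 ^ (c + i)) + Multiset.range (2 ^ (c + i))

/-- The columns `j` of the vertical tiles `{j} ×ˢ T` of `BBA c i` (those above the diagonal),
with multiplicity. -/
def colTiles : ℕ → ℕ → Multiset ℕ
  | 0, i => Multiset.range (2 ^ i - 1)
  | c + 1, i => colTiles c i + (colTiles c i).map (· + 2 ^ (c + i)) + Multiset.range (2 ^ (c + i))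

variable (i : ℕ)

lemma subset_Vk (c : ℕ) : ∀ R ∈ BBA c i, R ⊆ Vk (c + i) := by
  induction c with
  | zero =>
    simp only [BBA, mem_union, mem_image, mem_range]
    rintro R (⟨p, hp, rfl⟩ | ⟨p, hp, rfl⟩) y hy <;>
      · simp only [mem_product, mem_Ico, mem_singleton] at hy
        rw [mem_Vk, zero_add]
        omega
  | succ c ih =>
    simp only [BBA, mem_union, mem_image, mem_range]
    rintro R (((hR | ⟨R, hR, rfl⟩) | ⟨j, hj, rfl⟩) | ⟨j, hj, rfl⟩) y hy
    · have := mem_Vk.1 (ih R hR hy)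
      rw [mem_Vk, add_right_comm, pow_succ]
      omega
    · obtain ⟨h1, h2, hy⟩ := mem_shiftTile.1 hy
      have := mem_Vk.1 (ih R hR hy)
      rw [mem_Vk, add_right_comm, pow_succ]
      omega
    all_goals
      simp only [mem_product, mem_Ico, mem_singleton, pow_succ] at hy
      rw [mem_Vk, add_right_comm, pow_succ]
      omega

lemma mem_sides (c : ℕ) : ∀ x ∈ Vk (c + i), x ∈ (sides c i x).1 ×ˢ (sides c i x).2 := by
  induction c with
  | zero =>
    intro x hx
    rw [zero_add, mem_Vk] at hx
    by_cases h : x.2 ≤ x.1 <;> simp [sides, h] <;> omega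
  | succ c ih =>
    intro x hx
    rw [mem_Vk, add_right_comm, pow_succ] at hx
    by_cases h1 : x.1 < 2 ^ (c + i) <;> by_cases h2 : x.2 < 2 ^ (c + i)
    · simpa [sides, h1, h2] using ih x (mem_Vk.2 ⟨h1, h2⟩)
    · simp [sides, h1, h2, pow_succ]; omega
    · simp [sides, h1, h2, pow_succ]; omega
    · have := ih (x.1 - 2 ^ (c + i), x.2 - 2 ^ (c + i)) (mem_Vk.2 ⟨by omega, by omega⟩)
      simp only [mem_product] at this
      simp only [sides, h1, h2, if_false, Prod.map, mem_product, mem_image]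
      exact ⟨⟨_, this.1, by omega⟩, ⟨_, this.2, by omega⟩⟩

lemma sides_mem_BBA (c : ℕ) : ∀ x ∈ Vk (c + i), (sides c i x).1 ×ˢ (sides c i x).2 ∈ BBA c i := by
  induction c with
  | zero =>
    intro x hx
    rw [zero_add, mem_Vk] at hx
    simp only [BBA, mem_union, mem_image, mem_range]
    by_cases h : x.2 ≤ x.1
    · exact Or.inl ⟨x.2, hx.2, by simp [sides, h]⟩
    · exact Or.inr ⟨x.1, by omega, by simp [sides, h]⟩
  | succ c ih =>
    intro x hx
    rw [mem_Vk, add_right_comm, pow_succ] at hx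
    simp only [BBA, mem_union, mem_image, mem_range]
    by_cases h1 : x.1 < 2 ^ (c + i) <;> by_cases h2 : x.2 < 2 ^ (c + i)
    · simpa [sides, h1, h2] using Or.inl (Or.inl (Or.inl (ih x (mem_Vk.2 ⟨h1, h2⟩))))
    · exact Or.inr ⟨x.1, h1, by simp [sides, h1, h2]⟩
    · exact Or.inl (Or.inr ⟨x.2, h2, by simp [sides, h1, h2]⟩)
    · refine Or.inl (Or.inl (Or.inr ⟨_, ih (x.1 - 2 ^ (c + i), x.2 - 2 ^ (c + i))
        (mem_Vk.2 ⟨by omega, by omega⟩), ?_⟩))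
      simp [sides, h1, h2, shiftTile_product]

lemma eq_sides_of_mem (c : ℕ) :
    ∀ R ∈ BBA c i, ∀ x ∈ R, R = (sides c i x).1 ×ˢ (sides c i x).2 := by
  induction c with
  | zero =>
    simp only [BBA, mem_union, mem_image, mem_range]
    rintro R (⟨p, hp, rfl⟩ | ⟨p, hp, rfl⟩) x hx <;>
      simp only [mem_product, mem_Ico, mem_singleton] at hx
    · simp [sides, hx]
    · simp [sides, hx, show ¬ x.2 ≤ p by omega]
  | succ c ih =>
    simp only [BBA, mem_union, mem_image, mem_range]
    rintro R (((hR | ⟨R, hR, rfl⟩) | ⟨j, hj, rfl⟩) | ⟨j, hj, rfl⟩) x hx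
    · have := mem_Vk.1 (subset_Vk i c R hR hx)
      simpa [sides, this] using ih R hR x hx
    · obtain ⟨h1, h2, hx⟩ := mem_shiftTile.1 hx
      have := mem_Vk.1 (subset_Vk i c R hR hx)
      rw [ih R hR _ hx]
      simp [sides, shiftTile_product, show ¬ x.1 < 2 ^ (c + i) by omega,
        show ¬ x.2 < 2 ^ (c + i) by omega]
    · simp only [mem_product, mem_Ico, mem_singleton] at hx
      simp [sides, show ¬ x.1 < 2 ^ (c + i) by omega, hx.2, hj]
    · simp only [mem_product, mem_Ico, mem_singleton] at hx
      simp [sides, show ¬ x.2 < 2 ^ (c + i) by omega, hx.1, hj]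

lemma tileOf_eq_sides (c : ℕ) {x : ℕ × ℕ} (hx : x ∈ Vk (c + i)) :
    tileOf (BBA c i) x = (sides c i x).1 ×ˢ (sides c i x).2 :=
  tileOf_eq_of_forall_eq (sides_mem_BBA i c x hx) (mem_sides i c x hx)
    fun R hR hxR => eq_sides_of_mem i c R hR x hxR

lemma sides_subset_range {c : ℕ} {x : ℕ × ℕ} (hx : x ∈ Vk (c + i)) :
    (sides c i x).1 ⊆ range (2 ^ (c + i)) ∧ (sides c i x).2 ⊆ range (2 ^ (c + i)) := by
  have hsub := subset_Vk i c _ (sides_mem_BBA i c x hx)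
  obtain ⟨h1, h2⟩ := mem_product.1 (mem_sides i c x hx)
  exact ⟨fun y hy => mem_range.2 (mem_Vk.1 (hsub (x := (y, x.2)) (mem_product.2 ⟨hy, h2⟩))).1,
    fun y hy => mem_range.2 (mem_Vk.1 (hsub (x := (x.1, y)) (mem_product.2 ⟨h1, hy⟩))).2⟩

lemma card_filter_mem_tileOf_left {c : ℕ} {x : ℕ × ℕ} (hx : x ∈ Vk (c + i)) :
    ((range (2 ^ (c + i))).filter fun y => (y, x.2) ∈ tileOf (BBA c i) x).card =
      (sides c i x).1.card := by
  rw [tileOf_eq_sides i c hx]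
  exact card_filter_mem_product_left (sides_subset_range i hx).1
    (mem_product.1 (mem_sides i c x hx)).2

lemma card_filter_mem_tileOf_right {c : ℕ} {x : ℕ × ℕ} (hx : x ∈ Vk (c + i)) :
    ((range (2 ^ (c + i))).filter fun y => (x.1, y) ∈ tileOf (BBA c i) x).card =
      (sides c i x).2.card := by
  rw [tileOf_eq_sides i c hx]
  exact card_filter_mem_product_right (sides_subset_range i hx).2
    (mem_product.1 (mem_sides i c x hx)).1

lemma sides_succ_of_lt {c a b : ℕ} (ha : a < 2 ^ (c + i)) (hb : b < 2 ^ (c + i)) :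
    sides (c + 1) i (a, b) = sides c i (a, b) := by
  simp [sides, ha, hb]

lemma sides_succ_add_left {c b : ℕ} (a : ℕ) (hb : b < 2 ^ (c + i)) :
    sides (c + 1) i (a + 2 ^ (c + i), b) = (Ico (2 ^ (c + i)) (2 ^ (c + i + 1)), {b}) := by
  simp [sides, hb]

lemma sides_succ_add_right {c a : ℕ} (b : ℕ) (ha : a < 2 ^ (c + i)) :
    sides (c + 1) i (a, b + 2 ^ (c + i)) = ({a}, Ico (2 ^ (c + i)) (2 ^ (c + i + 1))) := by
  simp [sides, ha]

lemma sides_succ_add_add (c a b : ℕ) :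
    sides (c + 1) i (a + 2 ^ (c + i), b + 2 ^ (c + i)) =
      Prod.map (image (· + 2 ^ (c + i))) (image (· + 2 ^ (c + i))) (sides c i (a, b)) := by
  simp [sides]

lemma sides_fst_of_lt (c : ℕ) : ∀ x : ℕ × ℕ, x.1 < x.2 → (sides c i x).1 = {x.1} := by
  induction c with
  | zero => intro x h; simp [sides, show ¬ x.2 ≤ x.1 by omega]
  | succ c ih =>
    rintro ⟨a, b⟩ (h : a < b)
    by_cases ha : a < 2 ^ (c + i) <;> by_cases hb : b < 2 ^ (c + i)
    · rw [sides_succ_of_lt i ha hb, ih _ h]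
    · simp [sides, ha, hb]
    · omega
    · obtain ⟨a, rfl⟩ := Nat.exists_eq_add_of_le' (not_lt.1 ha)
      obtain ⟨b, rfl⟩ := Nat.exists_eq_add_of_le' (not_lt.1 hb)
      simp [sides_succ_add_add, ih (a, b) (by simp only; omega)]

lemma sides_snd_of_le (c : ℕ) : ∀ x : ℕ × ℕ, x.2 ≤ x.1 → (sides c i x).2 = {x.2} := by
  induction c with
  | zero => intro x h; simp [sides, h]
  | succ c ih =>
    rintro ⟨a, b⟩ (h : b ≤ a)
    by_cases ha : a < 2 ^ (c + i) <;> by_cases hb : b < 2 ^ (c + i)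
    · rw [sides_succ_of_lt i ha hb, ih _ h]
    · omega
    · simp [sides, ha, hb]
    · obtain ⟨a, rfl⟩ := Nat.exists_eq_add_of_le' (not_lt.1 ha)
      obtain ⟨b, rfl⟩ := Nat.exists_eq_add_of_le' (not_lt.1 hb)
      simp [sides_succ_add_add, ih (a, b) (by simp only; omega)]

lemma sum_below_diag_div_width (c : ℕ) : ∀ φ : ℕ → ℚ,
    ∑ x ∈ Vk (c + i), (if x.2 ≤ x.1 then φ x.2 / (sides c i x).1.card else 0) =
      ((rowTiles c i).map φ).sum := by
  induction c with
  | zero =>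
    intro φ
    rw [zero_add, Vk, sum_product_right]
    refine sum_congr rfl fun b hb => ?_
    have hb : b < 2 ^ i := mem_range.1 hb
    calc _ = ∑ a ∈ range (2 ^ i), (if b ≤ a then φ b / (2 ^ i - b : ℕ) else 0) :=
          sum_congr rfl fun a _ => by split_ifs with h <;> simp [sides, h]
      _ = (2 ^ i - b : ℕ) * (φ b / (2 ^ i - b : ℕ)) := sum_range_ite_le _ _ _
      _ = φ b := mul_div_cancel₀ _ (Nat.cast_ne_zero.2 (by omega))
  | succ c ih =>
    intro φ
    have hn : (Ico (2 ^ (c + i)) (2 ^ (c + i + 1))).card = 2 ^ (c + i) := by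
      rw [Nat.card_Ico, pow_succ]; omega
    rw [rowTiles, Multiset.map_add, Multiset.map_add, Multiset.sum_add, Multiset.sum_add,
      Multiset.map_map, ← ih, ← ih, ← range_val, ← sum_eq_multiset_sum, ← sum_Vk_snd_div_two_pow,
      ← sum_add_distrib, ← sum_add_distrib, add_right_comm c, sum_Vk_succ]
    refine sum_congr rfl fun ⟨a, b⟩ hx => ?_
    obtain ⟨ha, hb⟩ := mem_Vk.1 hx
    simp only [sides_succ_of_lt i ha hb, sides_succ_add_left i a hb, sides_succ_add_right i b ha,
      sides_succ_add_add, Prod.map, hn, card_image_of_injective _ (add_left_injective _),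
      add_le_add_iff_right, show ¬ b + 2 ^ (c + i) ≤ a by omega, if_false,
      show b ≤ a + 2 ^ (c + i) by omega, if_true, Function.comp_apply]
    push_cast
    ring

lemma sum_above_diag_div_height (c : ℕ) : ∀ ψ : ℕ → ℚ,
    ∑ x ∈ Vk (c + i), (if x.2 ≤ x.1 then 0 else ψ x.1 / (sides c i x).2.card) =
      ((colTiles c i).map ψ).sum := by
  induction c with
  | zero =>
    intro ψ
    obtain ⟨m, hm⟩ : ∃ m, 2 ^ i = m + 1 := ⟨2 ^ i - 1, (Nat.sub_add_cancel Nat.one_le_two_pow).symm⟩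
    have hcol : ∀ a, ∑ b ∈ range (m + 1), (if b ≤ a then 0 else ψ a / (sides 0 i (a, b)).2.card) =
        (m + 1 - (a + 1) : ℕ) * (ψ a / (m + 1 - (a + 1) : ℕ)) := fun a => by
      rw [← sum_range_ite_le]
      refine sum_congr rfl fun b _ => ?_
      by_cases h : b ≤ a
      · simp [h, show ¬ a + 1 ≤ b by omega]
      · simp [sides, h, hm, show a + 1 ≤ b by omega]
    rw [zero_add, Vk, sum_product, colTiles, ← range_val, ← sum_eq_multiset_sum, hm,
      sum_congr rfl fun a _ => hcol a, sum_range_succ, Nat.sub_self, Nat.add_sub_cancel]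
    simp only [Nat.cast_zero, zero_mul, add_zero]
    refine sum_congr rfl fun a ha => mul_div_cancel₀ _ (Nat.cast_ne_zero.2 ?_)
    have := mem_range.1 ha
    omega
  | succ c ih =>
    intro ψ
    have hn : (Ico (2 ^ (c + i)) (2 ^ (c + i + 1))).card = 2 ^ (c + i) := by
      rw [Nat.card_Ico, pow_succ]; omega
    rw [colTiles, Multiset.map_add, Multiset.map_add, Multiset.sum_add, Multiset.sum_add,
      Multiset.map_map, ← ih, ← ih, ← range_val, ← sum_eq_multiset_sum, ← sum_Vk_fst_div_two_pow,
      ← sum_add_distrib, ← sum_add_distrib, add_right_comm c, sum_Vk_succ]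
    refine sum_congr rfl fun ⟨a, b⟩ hx => ?_
    obtain ⟨ha, hb⟩ := mem_Vk.1 hx
    simp only [sides_succ_of_lt i ha hb, sides_succ_add_left i a hb, sides_succ_add_right i b ha,
      sides_succ_add_add, Prod.map, hn, card_image_of_injective _ (add_left_injective _),
      add_le_add_iff_right, show ¬ b + 2 ^ (c + i) ≤ a by omega, if_false,
      show b ≤ a + 2 ^ (c + i) by omega, if_true, Function.comp_apply]
    push_cast
    ring

lemma card_rowTiles (c : ℕ) : ((rowTiles c i).card : ℚ) = 2 ^ (c + i) * (c + 2) / 2 := by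
  induction c with
  | zero => simp [rowTiles]
  | succ c ih =>
    simp only [rowTiles, Multiset.card_add, Multiset.card_map, Multiset.card_range]
    push_cast [ih, add_right_comm c 1 i, pow_succ]
    ring

lemma card_colTiles (c : ℕ) :
    ((colTiles c i).card : ℚ) = 2 ^ (c + i) * (c + 2) / 2 - 2 ^ c := by
  induction c with
  | zero => simp [colTiles, Nat.cast_sub Nat.one_le_two_pow]
  | succ c ih =>
    simp only [colTiles, Multiset.card_add, Multiset.card_map, Multiset.card_range]
    push_cast [ih, add_right_comm c 1 i, pow_succ]
    ring

lemma sum_rowTiles (c : ℕ) : ((rowTiles c i).map fun j : ℕ => (2 ^ (c + i) : ℚ) - j).sum =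
    2 ^ (c + i) * ((c + 3) * 2 ^ (c + i) - 2 ^ i + c + 2) / 4 := by
  induction c with
  | zero =>
    rw [rowTiles, ← range_val, ← sum_eq_multiset_sum, sum_sub_distrib, sum_range_natCast]
    simp
    ring
  | succ c ih =>
    have h := sum_map_sub_doubling (rowTiles c i) (2 ^ (c + i)) (2 ^ (c + i))
    push_cast at h
    rw [rowTiles, add_right_comm c 1 i, pow_succ, mul_two, h, ih, card_rowTiles]
    push_cast [add_right_comm c 1 i, pow_succ]
    ring

lemma sum_colTiles (c : ℕ) :
    ((colTiles c i).map fun j : ℕ => (2 ^ (c + i) - 1 : ℚ) - j).sum =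
      2 ^ (c + i) * ((c + 3) * 2 ^ (c + i) - c - 2 ^ i - 2 ^ (c + 1)) / 4 := by
  induction c with
  | zero =>
    rw [colTiles, ← range_val, ← sum_eq_multiset_sum, sum_sub_distrib, sum_range_natCast]
    simp [Nat.cast_sub Nat.one_le_two_pow]
    ring
  | succ c ih =>
    have h := sum_map_sub_doubling (colTiles c i) (2 ^ (c + i)) (2 ^ (c + i) - 1)
    push_cast at h
    rw [colTiles, add_right_comm c 1 i, pow_succ, mul_two,
      show (fun j : ℕ => (2 ^ (c + i) + 2 ^ (c + i) - 1 : ℚ) - j) =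
        fun j : ℕ => (2 ^ (c + i) - 1 + 2 ^ (c + i) : ℚ) - j from funext fun j => by ring,
      h, ih, card_colTiles]
    push_cast [pow_succ]
    ring

lemma avgPAR2_Auc (c : ℕ) :
    avgPAR2 (c + i) Auc (BBA c i) = (c + 5) / 4 + (c - 2 ^ i) / (4 * 2 ^ (c + i)) := by
  have hterm : ∀ x ∈ Vk (c + i),
      (((range (2 ^ (c + i))).filter fun y => Auc (y, x.2) = Auc x).card : ℚ) /
          ((range (2 ^ (c + i))).filter fun y => (y, x.2) ∈ tileOf (BBA c i) x).card =
        (if x.2 ≤ x.1 then ((2 : ℚ) ^ (c + i) - x.2) / (sides c i x).1.card else 0) +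
          if x.2 ≤ x.1 then 0 else 1 := by
    intro x hx
    rw [card_filter_Auc_left (mem_Vk.1 hx).1, card_filter_mem_tileOf_left i hx]
    split_ifs with h
    · rw [Nat.cast_sub (mem_Vk.1 hx).2.le, add_zero]
      push_cast
      rfl
    · rw [sides_fst_of_lt i c x (not_le.1 h)]
      simp
  rw [avgPAR2, sum_congr rfl hterm, sum_add_distrib, sum_below_diag_div_width i c
    (fun j => 2 ^ (c + i) - j), sum_rowTiles, sum_Vk_ite_le_zero_one, pow_mul']
  field_simp
  ring

lemma avgPAR1_Auc (c : ℕ) :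
    avgPAR1 (c + i) Auc (BBA c i) =
      (c + 5) / 4 + (2 - c - 2 ^ i - 2 ^ (c + 1)) / (4 * 2 ^ (c + i)) := by
  have hterm : ∀ x ∈ Vk (c + i),
      (((range (2 ^ (c + i))).filter fun y => Auc (x.1, y) = Auc x).card : ℚ) /
          ((range (2 ^ (c + i))).filter fun y => (x.1, y) ∈ tileOf (BBA c i) x).card =
        (if x.2 ≤ x.1 then 1 else 0) +
          if x.2 ≤ x.1 then 0 else ((2 : ℚ) ^ (c + i) - 1 - x.1) / (sides c i x).2.card := by
    intro x hx
    rw [card_filter_Auc_right (mem_Vk.1 hx).2, card_filter_mem_tileOf_right i hx]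
    split_ifs with h
    · rw [sides_snd_of_le i c x h]
      simp
    · rw [Nat.cast_sub (by have := (mem_Vk.1 hx).1; omega), zero_add]
      push_cast
      ring
  rw [avgPAR1, sum_congr rfl hterm, sum_add_distrib, sum_above_diag_div_height i c
    (fun j => 2 ^ (c + i) - 1 - j), sum_colTiles, sum_Vk_ite_le_one_zero, pow_mul']
  field_simp
  ring

end BBA

/-- with `k = c + i`, the average-case PAR w.r.t. party 2 of
`T_{c,i}` for `A_k` is at least the average-case PAR w.r.t. party 1;
consequently the average-case subjective PAR of `T_{c,i}` equals
`(c+5)/4 − 1/2^{c+2} + c/2^{k+2}`. -/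
theorem stmt16 (c i : ℕ) :
    avgPAR1 (c + i) Auc (BBA c i) ≤ avgPAR2 (c + i) Auc (BBA c i) ∧
      max (avgPAR1 (c + i) Auc (BBA c i)) (avgPAR2 (c + i) Auc (BBA c i)) =
        ((c : ℚ) + 5) / 4 - 1 / 2 ^ (c + 2) + (c : ℚ) / 2 ^ (c + i + 2) := by
  have hle : avgPAR1 (c + i) Auc (BBA c i) ≤ avgPAR2 (c + i) Auc (BBA c i) := by
    rw [BBA.avgPAR1_Auc, BBA.avgPAR2_Auc]
    have : (2 : ℚ) ≤ 2 ^ (c + 1) := le_self_pow₀ (by norm_num) (by omega)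
    have hpos : (0 : ℚ) < 4 * 2 ^ (c + i) := by positivity
    rw [add_le_add_iff_left, div_le_div_iff_of_pos_right hpos]
    linarith
  refine ⟨hle, ?_⟩
  rw [max_eq_right hle, BBA.avgPAR2_Auc]
  field_simp
  ring
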